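/- Let k be a field and A a finite set of points of k^n, and let I(A) be its vanishing ideal. Then the residue classes of the monomials X^γ, as γ runs through D(A), form a basis of the k-vector space k[X_1,…,X_n]/I(A). -/

import Mathlib

/-- `D ∈ 𝒟ₙ`: a finite set `D ⊆ ℕ₀ⁿ` (given as a `Finset`) such that whenever `d ∈ D`
and `dᵢ ≠ 0`, then `d − eᵢ ∈ D`. -/
def IsDset {n : ℕ} (D : Finset (Fin n → ℕ)) : Prop :=
  ∀ d ∈ D, ∀ i : Fin n, d i ≠ 0 → d - Pi.single i 1 ∈ D

variable {k : Type*} [Field k] [DecidableEq k]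

/-- The set `D(A) ⊆ ℕ₀ⁿ` attached to a finite set of points `A ⊆ kⁿ`, defined by
induction on `n`.  For `n = 0`, `D(A)` is empty if `A` is and the single point of `ℕ₀⁰`
otherwise (so that for `n = 1` one gets `D(A) = {0, 1, …, #A − 1}`).  For `n + 1`:
writing `p(A)` for the set of first coordinates of `A` and
`H a₁ = p⁻¹(a₁) ∩ A ⊆ kⁿ` (via the projection `Fin.tail` forgetting the first
coordinate), `D(A) = Σ_{a₁ ∈ p(A)} D(H a₁)`, the sum with respect to the addition `+`
on `𝒟`; spelled out via the closed formula for such sums, `d ∈ D(A)` iff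
`Fin.tail d ∈ ⋃_{a₁ ∈ p(A)} D(H a₁)` and `d 0 < #{a₁ ∈ p(A) : Fin.tail d ∈ D(H a₁)}`. -/
def DofA : (n : ℕ) → Finset (Fin n → k) → Finset (Fin n → ℕ)
  | 0, A => A.image (fun _ => (fun _ => 0))
  | (n + 1), A =>
      ((A.image (fun a => a 0)).biUnion
          (fun a1 => DofA n ((A.filter (fun a => a 0 = a1)).image (fun a => Fin.tail a)))).biUnion
        (fun dh =>
          (Finset.range
              (((A.image (fun a => a 0)).filter
                  (fun a1 =>
                    dh ∈ DofA n ((A.filter (fun a => a 0 = a1)).image (fun a => Fin.tail a)))).card)).image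
            (fun j => Fin.cons j dh))


/-- The vanishing ideal `I(A)` of a finite set of points `A ⊆ kⁿ`: all polynomials in
`k[X₁,…,Xₙ]` vanishing at every point of `A`. -/
def vanIdeal (n : ℕ) (A : Finset (Fin n → k)) : Ideal (MvPolynomial (Fin n) k) where
  carrier := {f | ∀ a ∈ A, MvPolynomial.eval a f = 0}
  add_mem' := by
    intro f g hf hg a ha
    simp [map_add, hf a ha, hg a ha]
  zero_mem' := by
    intro a ha
    simp
  smul_mem' := by
    intro c f hf a ha
    simp [smul_eq_mul, map_mul, hf a ha]

open Finset

/-! Order exponent vectors colexicographically. Every monomial `X^e` then agrees on `A` with a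
combination of monomials `X^γ`, `γ ∈ D(A)`, `γ ≤ e`. On each fiber `H(a₁)` this holds by induction
on `n`; Lagrange interpolation in the first variable glues the fibers together, and on the fibers
whose `D` does not contain the tail of `e` the error is pushed down to strictly smaller exponents,
where well-founded induction applies. So the monomials of `D(A)` span the functions on `A`, which
is `k[X]/I(A)` by evaluation, and since `#D(A) = #A` they form a basis. -/

def ColexLT : {n : ℕ} → (Fin n → ℕ) → (Fin n → ℕ) → Prop
  | 0, _, _ => False
  | _ + 1, x, y => ColexLT (Fin.tail x) (Fin.tail y) ∨ (Fin.tail x = Fin.tail y ∧ x 0 < y 0)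

theorem wellFounded_colexLT : ∀ n, WellFounded (@ColexLT n)
  | 0 => ⟨fun x => ⟨x, fun _ h => h.elim⟩⟩
  | n + 1 => by
    refine Subrelation.wf (fun {x y} hxy => ?_)
      (InvImage.wf (fun x : Fin (n + 1) → ℕ => (Fin.tail x, x 0))
        ((wellFounded_colexLT n).prod_lex wellFounded_lt))
    rcases hxy with h | ⟨h, h0⟩
    · exact Prod.Lex.left _ _ h
    · exact Prod.lex_def.2 (Or.inr ⟨h, h0⟩)

theorem ColexLT.trans : ∀ {n} {x y z : Fin n → ℕ}, ColexLT x y → ColexLT y z → ColexLT x z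
  | 0, _, _, _, h, _ => h.elim
  | _ + 1, _, _, _, Or.inl hxy, Or.inl hyz => Or.inl (hxy.trans hyz)
  | _ + 1, _, _, _, Or.inl hxy, Or.inr ⟨hyz, _⟩ => Or.inl (hyz ▸ hxy)
  | _ + 1, _, _, _, Or.inr ⟨hxy, _⟩, Or.inl hyz => Or.inl (hxy ▸ hyz)
  | _ + 1, _, _, _, Or.inr ⟨hxy, hxy0⟩, Or.inr ⟨hyz, hyz0⟩ =>
    Or.inr ⟨hxy.trans hyz, hxy0.trans hyz0⟩

section MonomialFunctions

variable {R : Type*} [CommRing R] {n : ℕ}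

def monomialFun (γ : Fin n → ℕ) (a : Fin n → R) : R := ∏ i, a i ^ γ i

def vanishingOn (A : Finset (Fin n → R)) : Submodule R ((Fin n → R) → R) where
  carrier := {f | ∀ a ∈ A, f a = 0}
  add_mem' hf hg a ha := by simp [hf a ha, hg a ha]
  zero_mem' _ _ := rfl
  smul_mem' c _ hf a ha := by simp [hf a ha]

def monomialSpanOn (A : Finset (Fin n → R)) (S : Set (Fin n → ℕ)) :
    Submodule R ((Fin n → R) → R) :=
  Submodule.span R (monomialFun '' S) ⊔ vanishingOn A

theorem monomialFun_mem_monomialSpanOn {A : Finset (Fin n → R)} {S : Set (Fin n → ℕ)}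
    {γ : Fin n → ℕ} (hγ : γ ∈ S) : monomialFun γ ∈ monomialSpanOn A S :=
  Submodule.mem_sup_left (Submodule.subset_span ⟨γ, hγ, rfl⟩)

theorem vanishingOn_le_monomialSpanOn (A : Finset (Fin n → R)) (S : Set (Fin n → ℕ)) :
    vanishingOn A ≤ monomialSpanOn A S :=
  le_sup_right

theorem monomialSpanOn_mono {A : Finset (Fin n → R)} {S T : Set (Fin n → ℕ)} (h : S ⊆ T) :
    monomialSpanOn A S ≤ monomialSpanOn A T :=
  sup_le_sup_right (Submodule.span_mono (Set.image_mono h)) _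

theorem monomialSpanOn_empty (S : Set (Fin n → ℕ)) :
    monomialSpanOn (∅ : Finset (Fin n → R)) S = ⊤ :=
  eq_top_iff.2 fun _ _ => vanishingOn_le_monomialSpanOn _ _ fun _ ha => absurd ha (notMem_empty _)

def liftTail (h : R → R) : ((Fin n → R) → R) →ₗ[R] ((Fin (n + 1) → R) → R) where
  toFun g a := h (a 0) * g (Fin.tail a)
  map_add' f g := by ext; simp [mul_add]
  map_smul' c g := by ext; simp [mul_left_comm]

@[simp]
theorem liftTail_apply (h : R → R) (g : (Fin n → R) → R) (a : Fin (n + 1) → R) :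
    liftTail h g a = h (a 0) * g (Fin.tail a) := rfl

theorem liftTail_pow_monomialFun (i : ℕ) (γ : Fin n → ℕ) :
    liftTail (· ^ i) (monomialFun γ) = monomialFun (R := R) (Fin.cons i γ) := by
  ext a
  simp [monomialFun, Fin.prod_univ_succ, Fin.tail]

end MonomialFunctions

section Fibers

variable {R : Type*} [DecidableEq R] {n : ℕ}

def firstCoords (A : Finset (Fin (n + 1) → R)) : Finset R := A.image (fun a => a 0)

theorem apply_zero_mem_firstCoords {A : Finset (Fin (n + 1) → R)} {a : Fin (n + 1) → R}
    (ha : a ∈ A) : a 0 ∈ firstCoords A :=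
  mem_image_of_mem (· 0) ha

def fiber (A : Finset (Fin (n + 1) → R)) (a₁ : R) : Finset (Fin n → R) :=
  (A.filter (fun a => a 0 = a₁)).image Fin.tail

theorem tail_mem_fiber {A : Finset (Fin (n + 1) → R)} {a : Fin (n + 1) → R} (ha : a ∈ A) :
    Fin.tail a ∈ fiber A (a 0) :=
  mem_image_of_mem _ (mem_filter.2 ⟨ha, rfl⟩)

theorem card_fiber (A : Finset (Fin (n + 1) → R)) (a₁ : R) :
    #(fiber A a₁) = #(A.filter (fun a => a 0 = a₁)) := by
  refine card_image_of_injOn fun a ha b hb hab => ?_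
  rw [← Fin.cons_self_tail a, ← Fin.cons_self_tail b, hab,
    (mem_filter.1 (mem_coe.1 ha)).2, (mem_filter.1 (mem_coe.1 hb)).2]

theorem sum_card_fiber (A : Finset (Fin (n + 1) → R)) :
    ∑ a₁ ∈ firstCoords A, #(fiber A a₁) = #A := by
  simp_rw [card_fiber, firstCoords, ← card_eq_sum_card_image]

variable [CommRing R]

theorem mem_monomialSpanOn_of_fibers {A : Finset (Fin (n + 1) → R)}
    {T : Set (Fin (n + 1) → ℕ)} {f : (Fin (n + 1) → R) → R}
    (hf : ∀ a₁ ∈ firstCoords A,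
      liftTail (Pi.single a₁ 1) (fun x => f (Fin.cons a₁ x)) ∈ monomialSpanOn A T) :
    f ∈ monomialSpanOn A T := by
  have hfg : f - ∑ a₁ ∈ firstCoords A, liftTail (Pi.single a₁ 1) (fun x => f (Fin.cons a₁ x)) ∈
      vanishingOn A := by
    intro a ha
    rw [Pi.sub_apply, sub_eq_zero, Finset.sum_apply,
      Finset.sum_eq_single_of_mem (a 0) (apply_zero_mem_firstCoords ha)]
    · simp
    · intro a₁ _ hne
      simp [Ne.symm hne]
  simpa using add_mem (sum_mem hf) (vanishingOn_le_monomialSpanOn A T hfg)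

theorem liftTail_single_mem_monomialSpanOn {A : Finset (Fin (n + 1) → R)} {a₁ : R}
    {S : Set (Fin n → ℕ)} {T : Set (Fin (n + 1) → ℕ)} {g : (Fin n → R) → R}
    (hg : g ∈ monomialSpanOn (fiber A a₁) S)
    (hS : ∀ γ ∈ S, liftTail (Pi.single a₁ 1) (monomialFun γ) ∈ monomialSpanOn A T) :
    liftTail (Pi.single a₁ 1) g ∈ monomialSpanOn A T := by
  refine (sup_le (Submodule.span_le.2 ?_) fun v hv => ?_ :
    monomialSpanOn (fiber A a₁) S ≤ (monomialSpanOn A T).comap (liftTail _)) hg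
  · rintro _ ⟨γ, hγ, rfl⟩
    exact hS γ hγ
  · refine vanishingOn_le_monomialSpanOn A T fun a ha => ?_
    by_cases h : a 0 = a₁
    · rw [liftTail_apply, hv _ (h ▸ tail_mem_fiber ha), mul_zero]
    · rw [liftTail_apply, Pi.single_eq_of_ne h, zero_mul]

end Fibers

section PointSets

omit [Field k]

variable {n : ℕ}

def firstCoordsWith (A : Finset (Fin (n + 1) → k)) (δ : Fin n → ℕ) : Finset k :=
  (firstCoords A).filter (fun a₁ => δ ∈ DofA n (fiber A a₁))

theorem mem_firstCoordsWith {A : Finset (Fin (n + 1) → k)} {δ : Fin n → ℕ} {a₁ : k} :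
    a₁ ∈ firstCoordsWith A δ ↔ a₁ ∈ firstCoords A ∧ δ ∈ DofA n (fiber A a₁) :=
  mem_filter

theorem DofA_succ (A : Finset (Fin (n + 1) → k)) :
    DofA (n + 1) A = ((firstCoords A).biUnion fun a₁ => DofA n (fiber A a₁)).biUnion
      fun δ => (range #(firstCoordsWith A δ)).image (Fin.cons · δ) :=
  rfl

theorem mem_DofA_succ {A : Finset (Fin (n + 1) → k)} {γ : Fin (n + 1) → ℕ} :
    γ ∈ DofA (n + 1) A ↔ γ 0 < #(firstCoordsWith A (Fin.tail γ)) := by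
  simp only [DofA_succ, mem_biUnion, mem_image, mem_range]
  constructor
  · rintro ⟨δ, -, i, hi, rfl⟩
    simpa using hi
  · intro hγ
    obtain ⟨a₁, ha₁⟩ := card_pos.1 (Nat.zero_lt_of_lt hγ)
    exact ⟨Fin.tail γ, ⟨a₁, mem_firstCoordsWith.1 ha₁⟩, γ 0, hγ, Fin.cons_self_tail γ⟩

theorem mem_DofA_zero {A : Finset (Fin 0 → k)} {γ : Fin 0 → ℕ} :
    γ ∈ DofA 0 A ↔ A.Nonempty := by
  simp only [DofA, mem_image]
  exact ⟨fun ⟨a, ha, _⟩ => ⟨a, ha⟩, fun ⟨a, ha⟩ => ⟨a, ha, Subsingleton.elim _ _⟩⟩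

theorem card_DofA : ∀ (n : ℕ) (A : Finset (Fin n → k)), #(DofA n A) = #A
  | 0, A => card_image_of_injective _ fun _ _ _ => Subsingleton.elim _ _
  | n + 1, A => by
    rw [DofA_succ, card_biUnion]
    · simp_rw [card_image_of_injective _ (Fin.cons_left_injective _), card_range,
        firstCoordsWith, card_filter]
      rw [sum_comm, ← sum_card_fiber A]
      refine sum_congr rfl fun a₁ ha₁ => ?_
      rw [← card_filter, filter_mem_eq_inter, inter_eq_right.2 (subset_biUnion_of_mem _ ha₁),
        card_DofA n]
    · intro δ _ δ' _ hne
      simp only [Function.onFun, disjoint_left, mem_image]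
      rintro _ ⟨i, -, rfl⟩ ⟨j, -, h⟩
      exact hne (congrArg Fin.tail h).symm

end PointSets

theorem exists_sum_pow_eq_on (s : Finset k) (h : k → k) :
    ∃ b : ℕ → k, ∀ x ∈ s, ∑ i ∈ range #s, b i * x ^ i = h x := by
  rcases s.eq_empty_or_nonempty with rfl | hs
  · exact ⟨0, by simp⟩
  set p := Lagrange.interpolate s id h
  have hdeg : p.natDegree < #s := by
    rcases eq_or_ne p 0 with hp | hp
    · simpa [hp] using hs.card_pos
    · exact (Polynomial.natDegree_lt_iff_degree_lt hp).2
        (Lagrange.degree_interpolate_lt _ (Set.injOn_id _))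
  refine ⟨p.coeff, fun x hx => ?_⟩
  rw [← Polynomial.eval_eq_sum_range' hdeg]
  exact Lagrange.eval_interpolate_at_node _ (Set.injOn_id _) hx

theorem liftTail_monomialFun_mem_monomialSpanOn {n : ℕ}
    (ih : ∀ (B : Finset (Fin n → k)) (e : Fin n → ℕ),
      monomialFun e ∈ monomialSpanOn B {γ | γ ∈ DofA n B ∧ (ColexLT γ e ∨ γ = e)})
    (A : Finset (Fin (n + 1) → k)) (e : Fin n → ℕ) (h : k → k) :
    liftTail h (monomialFun e) ∈
      monomialSpanOn A {γ | γ ∈ DofA (n + 1) A ∧ (ColexLT (Fin.tail γ) e ∨ Fin.tail γ = e)} := by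
  induction e using (wellFounded_colexLT n).induction generalizing h with
  | _ e ihe =>
  obtain ⟨b, hb⟩ := exists_sum_pow_eq_on (firstCoordsWith A e) h
  set q : k → k := fun x => ∑ i ∈ range #(firstCoordsWith A e), b i * x ^ i
  have hq : liftTail q (monomialFun e) =
      ∑ i ∈ range #(firstCoordsWith A e), b i • monomialFun (Fin.cons i e) := by
    ext a
    simp [q, ← liftTail_pow_monomialFun, Finset.sum_mul, mul_assoc]
  have hsplit : liftTail h (monomialFun e) =
      liftTail q (monomialFun e) + liftTail (h - q) (monomialFun e) := by
    ext a
    simp [sub_mul]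
  rw [hsplit, hq]
  refine add_mem (sum_mem fun i hi => Submodule.smul_mem _ _
    (monomialFun_mem_monomialSpanOn ⟨?_, Or.inr (Fin.tail_cons _ _)⟩))
    (mem_monomialSpanOn_of_fibers fun a₁ ha₁ => ?_)
  · simpa [mem_DofA_succ] using hi
  -- on the fibers containing `e` the interpolation error vanishes; on the others `e` reduces
  -- to strictly smaller exponents
  have hfib : (fun x => liftTail (h - q) (monomialFun e) (Fin.cons a₁ x)) =
      (h - q) a₁ • monomialFun e := by
    ext x
    simp
  rw [hfib, map_smul]
  by_cases he : a₁ ∈ firstCoordsWith A e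
  · rw [show (h - q) a₁ = 0 from sub_eq_zero.2 (hb a₁ he).symm, zero_smul]
    exact zero_mem _
  refine Submodule.smul_mem _ _ (liftTail_single_mem_monomialSpanOn (ih (fiber A a₁) e) ?_)
  rintro δ ⟨hδ, hlt | rfl⟩
  · refine monomialSpanOn_mono ?_ (ihe δ hlt _)
    rintro γ ⟨hγ, hγδ | hγδ⟩
    · exact ⟨hγ, Or.inl (hγδ.trans hlt)⟩
    · exact ⟨hγ, Or.inl (hγδ ▸ hlt)⟩
  · exact absurd (mem_firstCoordsWith.2 ⟨ha₁, hδ⟩) he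

theorem monomialFun_mem_monomialSpanOn_colex : ∀ (n : ℕ) (A : Finset (Fin n → k))
    (e : Fin n → ℕ), monomialFun e ∈ monomialSpanOn A {γ | γ ∈ DofA n A ∧ (ColexLT γ e ∨ γ = e)}
  | 0, A, e => by
    rcases A.eq_empty_or_nonempty with rfl | hA
    · simp [monomialSpanOn_empty]
    · exact monomialFun_mem_monomialSpanOn ⟨mem_DofA_zero.2 hA, Or.inr rfl⟩
  | n + 1, A, e => by
    by_cases he : e ∈ DofA (n + 1) A
    · exact monomialFun_mem_monomialSpanOn ⟨he, Or.inr rfl⟩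
    rw [← Fin.cons_self_tail e, ← liftTail_pow_monomialFun]
    refine monomialSpanOn_mono ?_ (liftTail_monomialFun_mem_monomialSpanOn
      (monomialFun_mem_monomialSpanOn_colex n) A (Fin.tail e) _)
    rintro γ ⟨hγ, hlt | heq⟩
    · exact ⟨hγ, Or.inl (Or.inl (by simpa using hlt))⟩
    · refine ⟨hγ, Or.inl (Or.inr ⟨by simpa using heq, ?_⟩)⟩
      rw [mem_DofA_succ, heq] at hγ
      rw [mem_DofA_succ] at he
      simp only [Fin.cons_zero]
      omega

theorem monomialSpanOn_DofA_eq_top : ∀ (n : ℕ) (A : Finset (Fin n → k)),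
    monomialSpanOn A (DofA n A) = ⊤
  | 0, A => by
    rcases A.eq_empty_or_nonempty with rfl | hA
    · exact monomialSpanOn_empty _
    refine eq_top_iff.2 fun f _ => ?_
    have hf : f = f 0 • monomialFun 0 := by
      ext x
      simp [monomialFun, Subsingleton.elim x 0]
    rw [hf]
    exact Submodule.smul_mem _ _ (monomialFun_mem_monomialSpanOn (mem_DofA_zero.2 hA))
  | n + 1, A => eq_top_iff.2 fun f _ => mem_monomialSpanOn_of_fibers fun a₁ _ =>
    liftTail_single_mem_monomialSpanOn (by rw [monomialSpanOn_DofA_eq_top n]; trivial)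
      fun δ _ => monomialSpanOn_mono (fun γ hγ => hγ.1)
        (liftTail_monomialFun_mem_monomialSpanOn (monomialFun_mem_monomialSpanOn_colex n) A δ _)

theorem exists_basis_coe_eq_of_injective {ι R M N : Type*} [Ring R] [AddCommGroup M]
    [Module R M] [AddCommGroup N] [Module R N] {f : M →ₗ[R] N} (hf : Function.Injective f)
    (b : Module.Basis ι R N) {v : ι → M} (hv : ∀ i, f (v i) = b i) :
    ∃ c : Module.Basis ι R M, ⇑c = v := by
  have hsurj : Function.Surjective f := by
    rw [← LinearMap.range_eq_top, eq_top_iff, ← b.span_eq, Submodule.span_le]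
    rintro _ ⟨i, rfl⟩
    exact ⟨v i, hv i⟩
  refine ⟨b.map (LinearEquiv.ofBijective f ⟨hf, hsurj⟩).symm, funext fun i => ?_⟩
  rw [Module.Basis.map_apply, LinearEquiv.symm_apply_eq]
  exact (hv i).symm

noncomputable section Evaluation

omit [DecidableEq k]

variable {n : ℕ}

def evalOn (A : Finset (Fin n → k)) : MvPolynomial (Fin n) k →ₐ[k] (A → k) :=
  AlgHom.pi fun a => MvPolynomial.aeval a.1

theorem ker_evalOn (A : Finset (Fin n → k)) : RingHom.ker (evalOn A) = vanIdeal n A := by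
  ext f
  simp [evalOn, funext_iff, vanIdeal, MvPolynomial.aeval_eq_eval]

def quotEvalOn (A : Finset (Fin n → k)) :
    (MvPolynomial (Fin n) k ⧸ vanIdeal n A) →ₐ[k] (A → k) :=
  Ideal.Quotient.liftₐ (vanIdeal n A) (evalOn A) fun _ hf => by
    rwa [← RingHom.mem_ker, ker_evalOn]

theorem quotEvalOn_injective (A : Finset (Fin n → k)) : Function.Injective (quotEvalOn A) :=
  (Ideal.injective_lift_iff _).2 (ker_evalOn A)

theorem quotEvalOn_mk_monomial (A : Finset (Fin n → k)) (γ : Fin n → ℕ) :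
    quotEvalOn A (Ideal.Quotient.mk (vanIdeal n A)
      (MvPolynomial.monomial (Finsupp.equivFunOnFinite.symm γ) 1)) =
      fun a => monomialFun γ a.1 := by
  ext a
  change evalOn A _ a = _
  rw [evalOn, AlgHom.pi_apply, MvPolynomial.aeval_monomial, map_one, one_mul, Finsupp.prod_pow]
  rfl

end Evaluation

noncomputable section MonomialBasis

variable {n : ℕ}

theorem top_le_span_monomialFun_restrict (A : Finset (Fin n → k)) :
    ⊤ ≤ Submodule.span k
      (Set.range fun γ : {γ // γ ∈ DofA n A} => fun a : A => monomialFun γ.1 a.1) := by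
  set ρ := LinearMap.funLeft k k ((↑) : A → Fin n → k)
  have hρ : Submodule.map ρ (monomialSpanOn A (DofA n A)) = ⊤ := by
    rw [monomialSpanOn_DofA_eq_top, Submodule.map_top, LinearMap.range_eq_top]
    exact LinearMap.funLeft_surjective_of_injective _ _ _ Subtype.val_injective
  have hvan : Submodule.map ρ (vanishingOn A) = ⊥ :=
    eq_bot_iff.2 <| Submodule.map_le_iff_le_comap.2 fun f hf => funext fun a => hf a.1 a.2
  rw [monomialSpanOn, Submodule.map_sup, hvan, sup_bot_eq, Submodule.map_span,
    Set.image_image, Set.image_eq_range] at hρ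
  exact hρ.ge

def monomialBasisOn (A : Finset (Fin n → k)) : Module.Basis {γ // γ ∈ DofA n A} k (A → k) :=
  basisOfTopLeSpanOfCardEqFinrank _ (top_le_span_monomialFun_restrict A)
    (by simp [card_DofA, Module.finrank_fintype_fun_eq_card])

theorem monomialBasisOn_apply (A : Finset (Fin n → k)) (γ : {γ // γ ∈ DofA n A}) :
    monomialBasisOn A γ = fun a => monomialFun γ.1 a.1 := by
  rw [monomialBasisOn, coe_basisOfTopLeSpanOfCardEqFinrank]

end MonomialBasis

/-- The residue classes of the monomials `X^γ`, `γ ∈ D(A)`, form a basis of the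
`k`-vector space `k[X₁,…,Xₙ]/I(A)`. -/
theorem stmt_16 (n : ℕ) (A : Finset (Fin n → k)) :
    ∃ b : Module.Basis {γ : Fin n → ℕ // γ ∈ DofA n A} k
        (MvPolynomial (Fin n) k ⧸ vanIdeal n A),
      ∀ γ : {γ : Fin n → ℕ // γ ∈ DofA n A},
        b γ = Ideal.Quotient.mk (vanIdeal n A)
          (MvPolynomial.monomial (Finsupp.equivFunOnFinite.symm γ.1) 1) := by
  obtain ⟨b, hb⟩ := exists_basis_coe_eq_of_injective (f := (quotEvalOn A).toLinearMap)
    (v := fun γ => Ideal.Quotient.mk (vanIdeal n A)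
      (MvPolynomial.monomial (Finsupp.equivFunOnFinite.symm γ.1) 1))
    (quotEvalOn_injective A) (monomialBasisOn A)
    fun γ => (quotEvalOn_mk_monomial A γ.1).trans (monomialBasisOn_apply A γ).symm
  exact ⟨b, fun γ => congrFun hb γ⟩
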